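/- Inverse of a gauge transformation: if (f, c) : (x, g, a) → (x', g', a') is a gauge transformation between descent data in a cosimplicial crossed groupoid G, then (f⁻¹, Ad(f_{(0)})(c⁻¹)) is a gauge transformation (x', g', a') → (x, g, a). -/

import Mathlib

/-! Crossed groupoids (= crossed modules over groupoids), following Yekutieli,
"Combinatorial descent data for gerbes". -/

structure CrossedGroupoid : Type 1 where
  Obj : Type
  Hom : Obj → Obj → Type
  id : ∀ x, Hom x x
  comp : ∀ {x y z}, Hom y z → Hom x y → Hom x z
  inv : ∀ {x y}, Hom x y → Hom y x
  comp_assoc : ∀ {x y z w} (h : Hom z w) (g : Hom y z) (f : Hom x y),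
    comp (comp h g) f = comp h (comp g f)
  id_comp : ∀ {x y} (f : Hom x y), comp (id y) f = f
  comp_id : ∀ {x y} (f : Hom x y), comp f (id x) = f
  inv_comp : ∀ {x y} (f : Hom x y), comp (inv f) f = id x
  comp_inv : ∀ {x y} (f : Hom x y), comp f (inv f) = id y
  -- the totally disconnected groupoid 𝒢₂, i.e. a family of groups
  G2 : Obj → Type
  mul : ∀ {x}, G2 x → G2 x → G2 x
  one : ∀ x, G2 x
  inv2 : ∀ {x}, G2 x → G2 x
  mul_assoc : ∀ {x} (a b c : G2 x), mul (mul a b) c = mul a (mul b c)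
  one_mul : ∀ {x} (a : G2 x), mul (one x) a = a
  mul_one : ∀ {x} (a : G2 x), mul a (one x) = a
  inv2_mul : ∀ {x} (a : G2 x), mul (inv2 a) a = one x
  -- the twisting: an action of 𝒢₁ on 𝒢₂
  Ad : ∀ {x y}, Hom x y → G2 x → G2 y
  Ad_mul : ∀ {x y} (g : Hom x y) (a b : G2 x), Ad g (mul a b) = mul (Ad g a) (Ad g b)
  Ad_one : ∀ {x y} (g : Hom x y), Ad g (one x) = one y
  Ad_id : ∀ {x} (a : G2 x), Ad (id x) a = a
  Ad_comp : ∀ {x y z} (h : Hom y z) (g : Hom x y) (a : G2 x),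
    Ad (comp h g) a = Ad h (Ad g a)
  -- the feedback D : 𝒢₂ → 𝒢₁, identity on objects
  D : ∀ {x}, G2 x → Hom x x
  D_mul : ∀ {x} (a b : G2 x), D (mul a b) = comp (D a) (D b)
  D_one : ∀ x, D (one x) = id x
  -- equivariance of the feedback
  D_Ad : ∀ {x y} (g : Hom x y) (a : G2 x), D (Ad g a) = comp (comp g (D a)) (inv g)
  -- Peiffer condition
  peiffer : ∀ {x} (a b : G2 x), Ad (D a) b = mul (mul a b) (inv2 a)

namespace CrossedGroupoid

/-- Transport of 1-morphisms along equalities of objects. -/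
def hcast (G : CrossedGroupoid) {x x' y y' : G.Obj} (ex : x = x') (ey : y = y')
    (f : G.Hom x y) : G.Hom x' y' := ey ▸ ex ▸ f

/-- Transport of 2-morphisms along an equality of objects. -/
def cast2 (G : CrossedGroupoid) {x x' : G.Obj} (e : x = x') (a : G.G2 x) : G.G2 x' := e ▸ a

/-- The relation "isomorphic in 𝒢₁". -/
def pi0Rel (G : CrossedGroupoid) : G.Obj → G.Obj → Prop := fun x y => Nonempty (G.Hom x y)

/-- π₀ of a crossed groupoid: isomorphism classes of objects of 𝒢₁. -/
def pi0 (G : CrossedGroupoid) : Type := Quot G.pi0Rel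

/-- The right action relation on a hom-set: g' = g ∘ D(a). -/
def homRel (G : CrossedGroupoid) (x x' : G.Obj) : G.Hom x x' → G.Hom x x' → Prop :=
  fun g g' => ∃ a : G.G2 x, g' = G.comp g (G.D a)

/-- π₁(G, x, x') := 𝒢₁(x,x') / 𝒢₂(x). -/
def pi1' (G : CrossedGroupoid) (x x' : G.Obj) : Type := Quot (G.homRel x x')

/-- π₁(G, x) = Coker(D : 𝒢₂(x) → 𝒢₁(x)) as a quotient set. -/
def pi1 (G : CrossedGroupoid) (x : G.Obj) : Type := G.pi1' x x

/-- π₂(G, x) = Ker(D : 𝒢₂(x) → 𝒢₁(x)). -/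
def pi2 (G : CrossedGroupoid) (x : G.Obj) : Type := {a : G.G2 x // G.D a = G.id x}

end CrossedGroupoid

/-- A morphism of crossed groupoids. -/
structure CrossedGroupoidHom (G H : CrossedGroupoid) where
  obj : G.Obj → H.Obj
  map1 : ∀ {x y : G.Obj}, G.Hom x y → H.Hom (obj x) (obj y)
  map2 : ∀ {x : G.Obj}, G.G2 x → H.G2 (obj x)
  map1_comp : ∀ {x y z : G.Obj} (g : G.Hom y z) (f : G.Hom x y),
    map1 (G.comp g f) = H.comp (map1 g) (map1 f)
  map1_id : ∀ x : G.Obj, map1 (G.id x) = H.id (obj x)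
  map2_mul : ∀ {x : G.Obj} (a b : G.G2 x), map2 (G.mul a b) = H.mul (map2 a) (map2 b)
  map_D : ∀ {x : G.Obj} (a : G.G2 x), map1 (G.D a) = H.D (map2 a)
  map_Ad : ∀ {x y : G.Obj} (g : G.Hom x y) (a : G.G2 x),
    map2 (G.Ad g a) = H.Ad (map1 g) (map2 a)

namespace CrossedGroupoidHom

/-- Identity morphism of crossed groupoids. -/
def id (G : CrossedGroupoid) : CrossedGroupoidHom G G where
  obj := fun x => x
  map1 := fun f => f
  map2 := fun a => a
  map1_comp := fun _ _ => rfl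
  map1_id := fun _ => rfl
  map2_mul := fun _ _ => rfl
  map_D := fun _ => rfl
  map_Ad := fun _ _ => rfl

/-- Composition of morphisms of crossed groupoids. -/
def comp {G H K : CrossedGroupoid} (F₂ : CrossedGroupoidHom H K) (F₁ : CrossedGroupoidHom G H) :
    CrossedGroupoidHom G K where
  obj := fun x => F₂.obj (F₁.obj x)
  map1 := fun f => F₂.map1 (F₁.map1 f)
  map2 := fun a => F₂.map2 (F₁.map2 a)
  map1_comp := fun g f => by (try dsimp only); rw [F₁.map1_comp, F₂.map1_comp]
  map1_id := fun x => by (try dsimp only); rw [F₁.map1_id, F₂.map1_id]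
  map2_mul := fun a b => by (try dsimp only); rw [F₁.map2_mul, F₂.map2_mul]
  map_D := fun a => by (try dsimp only); rw [F₁.map_D, F₂.map_D]
  map_Ad := fun g a => by (try dsimp only); rw [F₁.map_Ad, F₂.map_Ad]

variable {G H : CrossedGroupoid}

/-- The induced map on π₀. -/
def pi0map (F : CrossedGroupoidHom G H) : G.pi0 → H.pi0 :=
  Quot.map F.obj (fun _ _ h => ⟨F.map1 h.some⟩)

/-- The induced map on π₁(−, x, x'). -/
def pi1'map (F : CrossedGroupoidHom G H) (x x' : G.Obj) :
    G.pi1' x x' → H.pi1' (F.obj x) (F.obj x') :=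
  Quot.map F.map1 (by
    rintro g g' ⟨a, rfl⟩
    exact ⟨F.map2 a, by rw [F.map1_comp, F.map_D]⟩)

/-- The induced map on π₁(−, x). -/
def pi1map (F : CrossedGroupoidHom G H) (x : G.Obj) : G.pi1 x → H.pi1 (F.obj x) :=
  F.pi1'map x x

/-- The induced map on π₂(−, x). -/
def pi2map (F : CrossedGroupoidHom G H) (x : G.Obj) : G.pi2 x → H.pi2 (F.obj x) :=
  fun a => ⟨F.map2 a.1, by rw [← F.map_D, a.2, F.map1_id]⟩

/-- A weak equivalence of crossed groupoids: bijective on π₀, π₁ and π₂. -/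
def IsWeakEquiv (F : CrossedGroupoidHom G H) : Prop :=
  Function.Bijective F.pi0map ∧ (∀ x, Function.Bijective (F.pi1map x)) ∧
    (∀ x, Function.Bijective (F.pi2map x))

end CrossedGroupoidHom

/-! ### Combinatorics of the simplex category -/

/-- The vertex (i) of Δ^q, as a monotone map Δ⁰ → Δ^q. -/
def vtxMap {q : ℕ} (i : Fin (q + 1)) : Fin 1 →o Fin (q + 1) :=
  ⟨fun _ => i, fun _ _ _ => le_rfl⟩

/-- The edge (i,j) of Δ^q, as a monotone map Δ¹ → Δ^q. -/
def edgeMap {q : ℕ} (i j : Fin (q + 1)) (h : i ≤ j) : Fin 2 →o Fin (q + 1) :=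
  ⟨fun k => if (k : ℕ) = 0 then i else j, by
    intro a b hab
    have hab' : (a : ℕ) ≤ (b : ℕ) := hab
    show (if (a : ℕ) = 0 then i else j) ≤ (if (b : ℕ) = 0 then i else j)
    by_cases ha : (a : ℕ) = 0
    · by_cases hb : (b : ℕ) = 0
      · rw [if_pos ha, if_pos hb]
      · rw [if_pos ha, if_neg hb]; exact h
    · have hb : ¬ (b : ℕ) = 0 := fun hb0 => ha (Nat.le_zero.mp (hb0 ▸ hab'))
      rw [if_neg ha, if_neg hb]⟩

/-- The triangle (i,j,k) of Δ^q, as a monotone map Δ² → Δ^q. -/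
def triMap {q : ℕ} (i j k : Fin (q + 1)) (hij : i ≤ j) (hjk : j ≤ k) :
    Fin 3 →o Fin (q + 1) :=
  ⟨fun m => if (m : ℕ) = 0 then i else if (m : ℕ) = 1 then j else k, by
    intro a b hab
    have hab' : (a : ℕ) ≤ (b : ℕ) := hab
    show (if (a : ℕ) = 0 then i else if (a : ℕ) = 1 then j else k) ≤
      (if (b : ℕ) = 0 then i else if (b : ℕ) = 1 then j else k)
    by_cases ha0 : (a : ℕ) = 0
    · by_cases hb0 : (b : ℕ) = 0
      · rw [if_pos ha0, if_pos hb0]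
      · by_cases hb1 : (b : ℕ) = 1
        · rw [if_pos ha0, if_neg hb0, if_pos hb1]; exact hij
        · rw [if_pos ha0, if_neg hb0, if_neg hb1]; exact hij.trans hjk
    · by_cases ha1 : (a : ℕ) = 1
      · have hb0 : ¬ (b : ℕ) = 0 := by omega
        by_cases hb1 : (b : ℕ) = 1
        · rw [if_neg ha0, if_pos ha1, if_neg hb0, if_pos hb1]
        · rw [if_neg ha0, if_pos ha1, if_neg hb0, if_neg hb1]; exact hjk
      · have hb0 : ¬ (b : ℕ) = 0 := by omega
        have hb1 : ¬ (b : ℕ) = 1 := by omega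
        rw [if_neg ha0, if_neg ha1, if_neg hb0, if_neg hb1]⟩

theorem comp_vtxMap {p q : ℕ} (α : Fin (p + 1) →o Fin (q + 1)) (i : Fin (p + 1)) :
    α.comp (vtxMap i) = vtxMap (α i) := rfl

/-! ### Cosimplicial crossed groupoids -/

/-- A cosimplicial crossed groupoid: a functor Δ → CrGrpd. -/
structure CosimplicialCrossedGroupoid : Type 1 where
  obj : ℕ → CrossedGroupoid
  map : ∀ {p q : ℕ}, (Fin (p + 1) →o Fin (q + 1)) → CrossedGroupoidHom (obj p) (obj q)
  map_id : ∀ p, map (OrderHom.id : Fin (p + 1) →o Fin (p + 1)) = CrossedGroupoidHom.id (obj p)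
  map_comp : ∀ {p q r : ℕ} (β : Fin (q + 1) →o Fin (r + 1)) (α : Fin (p + 1) →o Fin (q + 1)),
    map (β.comp α) = (map β).comp (map α)

namespace CosimplicialCrossedGroupoid

variable (G : CosimplicialCrossedGroupoid)

theorem obj_comp {p q r : ℕ} (β : Fin (q + 1) →o Fin (r + 1)) (α : Fin (p + 1) →o Fin (q + 1))
    (x : (G.obj p).Obj) :
    (G.map β).obj ((G.map α).obj x) = (G.map (β.comp α)).obj x := by
  rw [G.map_comp]; rfl

/-- The object x of G⁰ pushed to the vertex (i) of Δ^q. -/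
def X (x : (G.obj 0).Obj) (q : ℕ) (i : Fin (q + 1)) : (G.obj q).Obj :=
  (G.map (vtxMap i)).obj x

theorem X_push (x : (G.obj 0).Obj) {p q : ℕ} (α : Fin (p + 1) →o Fin (q + 1))
    (i : Fin (p + 1)) : (G.map α).obj (G.X x p i) = G.X x q (α i) := by
  unfold X
  rw [obj_comp, comp_vtxMap]

/-- Pushing a 1-morphism between vertex objects along α. -/
def push1 {x : (G.obj 0).Obj} {p q : ℕ} (α : Fin (p + 1) →o Fin (q + 1))
    {i j : Fin (p + 1)} (g : (G.obj p).Hom (G.X x p i) (G.X x p j)) :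
    (G.obj q).Hom (G.X x q (α i)) (G.X x q (α j)) :=
  (G.obj q).hcast (G.X_push x α i) (G.X_push x α j) ((G.map α).map1 g)

/-- Pushing a 2-morphism at a vertex object along α. -/
def push2 {x : (G.obj 0).Obj} {p q : ℕ} (α : Fin (p + 1) →o Fin (q + 1))
    {i : Fin (p + 1)} (a : (G.obj p).G2 (G.X x p i)) :
    (G.obj q).G2 (G.X x q (α i)) :=
  (G.obj q).cast2 (G.X_push x α i) ((G.map α).map2 a)

/-- Yekutieli's combinatorial descent conditions (Definition 1.5):
the failure-of-1-cocycle condition and the twisted 2-cocycle condition. -/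
def IsDescent (x : (G.obj 0).Obj)
    (g : (G.obj 1).Hom (G.X x 1 0) (G.X x 1 1))
    (a : (G.obj 2).G2 (G.X x 2 0)) : Prop :=
  ((G.obj 2).comp ((G.obj 2).comp ((G.obj 2).inv (G.push1 (edgeMap 0 2 (by decide)) g))
      (G.push1 (edgeMap 1 2 (by decide)) g)) (G.push1 (edgeMap 0 1 (by decide)) g)
    = (G.obj 2).D a)
  ∧
  ((G.obj 3).mul ((G.obj 3).mul
        ((G.obj 3).inv2 (G.push2 (triMap 0 1 3 (by decide) (by decide)) a))
        (G.push2 (triMap 0 2 3 (by decide) (by decide)) a))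
      (G.push2 (triMap 0 1 2 (by decide) (by decide)) a)
    = (G.obj 3).Ad ((G.obj 3).inv (G.push1 (edgeMap 0 1 (by decide)) g))
        (G.push2 (triMap 1 2 3 (by decide) (by decide)) a))

/-- A combinatorial descent datum (Definition 1.5). -/
structure Desc (G : CosimplicialCrossedGroupoid) where
  x : (G.obj 0).Obj
  g : (G.obj 1).Hom (G.X x 1 0) (G.X x 1 1)
  a : (G.obj 2).G2 (G.X x 2 0)
  isDescent : G.IsDescent x g a

/-- The Yekutieli gauge-transformation conditions (Definition 1.7) for a pair (f, c). -/
def IsGauge (x : (G.obj 0).Obj) (g : (G.obj 1).Hom (G.X x 1 0) (G.X x 1 1))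
    (a : (G.obj 2).G2 (G.X x 2 0))
    (x' : (G.obj 0).Obj) (g' : (G.obj 1).Hom (G.X x' 1 0) (G.X x' 1 1))
    (a' : (G.obj 2).G2 (G.X x' 2 0))
    (f : (G.obj 0).Hom x x') (c : (G.obj 1).G2 (G.X x 1 0)) : Prop :=
  (g' = (G.obj 1).comp ((G.obj 1).comp ((G.obj 1).comp
      ((G.map (vtxMap (1 : Fin 2))).map1 f) g) ((G.obj 1).D c))
      ((G.obj 1).inv ((G.map (vtxMap (0 : Fin 2))).map1 f)))
  ∧
  (a' = (G.obj 2).Ad ((G.map (vtxMap (0 : Fin 3))).map1 f)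
    ((G.obj 2).mul ((G.obj 2).mul ((G.obj 2).mul
        ((G.obj 2).inv2 (G.push2 (edgeMap 0 2 (by decide)) c)) a)
        ((G.obj 2).Ad ((G.obj 2).inv (G.push1 (edgeMap 0 1 (by decide)) g))
          (G.push2 (edgeMap 1 2 (by decide)) c)))
      (G.push2 (edgeMap 0 1 (by decide)) c)))

/-- Gauge equivalence of descent data. -/
def GaugeEquiv (P Q : G.Desc) : Prop :=
  ∃ (f : (G.obj 0).Hom P.x Q.x) (c : (G.obj 1).G2 (G.X P.x 1 0)),
    G.IsGauge P.x P.g P.a Q.x Q.g Q.a f c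

/-- The explicit formula for the transported 2-morphism a'
(Definition 1.7(ii) / Lemma 1.9). -/
def transportA {x x' : (G.obj 0).Obj} (f : (G.obj 0).Hom x x')
    (g : (G.obj 1).Hom (G.X x 1 0) (G.X x 1 1))
    (a : (G.obj 2).G2 (G.X x 2 0)) (c : (G.obj 1).G2 (G.X x 1 0)) :
    (G.obj 2).G2 (G.X x' 2 0) :=
  (G.obj 2).Ad ((G.map (vtxMap (0 : Fin 3))).map1 f)
    ((G.obj 2).mul ((G.obj 2).mul ((G.obj 2).mul
        ((G.obj 2).inv2 (G.push2 (edgeMap 0 2 (by decide)) c)) a)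
        ((G.obj 2).Ad ((G.obj 2).inv (G.push1 (edgeMap 0 1 (by decide)) g))
          (G.push2 (edgeMap 1 2 (by decide)) c)))
      (G.push2 (edgeMap 0 1 (by decide)) c))

end CosimplicialCrossedGroupoid

/-- A morphism of cosimplicial crossed groupoids. -/
structure CosimplicialMor (G H : CosimplicialCrossedGroupoid) where
  app : ∀ p, CrossedGroupoidHom (G.obj p) (H.obj p)
  naturality : ∀ {p q : ℕ} (α : Fin (p + 1) →o Fin (q + 1)),
    (app q).comp (G.map α) = (H.map α).comp (app p)

namespace CosimplicialMor

variable {G H : CosimplicialCrossedGroupoid}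

theorem app_X (F : CosimplicialMor G H) (x : (G.obj 0).Obj) (q : ℕ) (i : Fin (q + 1)) :
    (F.app q).obj (G.X x q i) = H.X ((F.app 0).obj x) q i :=
  congrFun (congrArg CrossedGroupoidHom.obj (F.naturality (vtxMap i))) x

/-- Image of an object of G⁰. -/
def objD (F : CosimplicialMor G H) (x : (G.obj 0).Obj) : (H.obj 0).Obj := (F.app 0).obj x

/-- Image of a 1-morphism in dimension 0. -/
def mapF (F : CosimplicialMor G H) {x x' : (G.obj 0).Obj} (f : (G.obj 0).Hom x x') :
    (H.obj 0).Hom (F.objD x) (F.objD x') := (F.app 0).map1 f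

/-- Image of the 1-morphism part of a descent datum. -/
def mapG (F : CosimplicialMor G H) {x : (G.obj 0).Obj}
    (g : (G.obj 1).Hom (G.X x 1 0) (G.X x 1 1)) :
    (H.obj 1).Hom (H.X (F.objD x) 1 0) (H.X (F.objD x) 1 1) :=
  (H.obj 1).hcast (F.app_X x 1 0) (F.app_X x 1 1) ((F.app 1).map1 g)

/-- Image of the 2-morphism part of a descent datum. -/
def mapA (F : CosimplicialMor G H) {x : (G.obj 0).Obj} (a : (G.obj 2).G2 (G.X x 2 0)) :
    (H.obj 2).G2 (H.X (F.objD x) 2 0) :=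
  (H.obj 2).cast2 (F.app_X x 2 0) ((F.app 2).map2 a)

/-- Image of the 2-morphism part of a gauge transformation. -/
def mapC (F : CosimplicialMor G H) {x : (G.obj 0).Obj} (c : (G.obj 1).G2 (G.X x 1 0)) :
    (H.obj 1).G2 (H.X (F.objD x) 1 0) :=
  (H.obj 1).cast2 (F.app_X x 1 0) ((F.app 1).map2 c)

/-- A weak equivalence of cosimplicial crossed groupoids. -/
def IsWeakEquiv (F : CosimplicialMor G H) : Prop := ∀ p, (F.app p).IsWeakEquiv

end CosimplicialMor

/-!
Inverting a gauge transformation is algebra in the crossed groupoids `G¹` and `G²`. Solving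
`g' = f_{(1)} ∘ g ∘ D(c) ∘ f_{(0)}⁻¹` for `g` gives `g = f_{(1)}⁻¹ ∘ g' ∘ D(c̃) ∘ f_{(0)}` with
`c̃ = Ad(f_{(0)})(c⁻¹)`. For the 2-morphisms, the pullbacks along the cofaces commute with all
crossed-groupoid operations, so `c̃_{(i,j)} = Ad(f_{(i)})(c_{(i,j)}⁻¹)` and
`g'_{(0,1)} = f_{(1)} ∘ g_{(0,1)} ∘ D(c_{(0,1)}) ∘ f_{(0)}⁻¹`; by the Peiffer identity the factor
`D(c_{(0,1)})` acts on `G²₂` by conjugation, and then every factor of `c` cancels in the group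
`G²₂(x_{(0)})`.
-/

namespace CrossedGroupoid

variable (G : CrossedGroupoid)

section Groupoid

variable {x y z : G.Obj}

theorem inv_comp_cancel_left (f : G.Hom x y) (h : G.Hom z x) :
    G.comp (G.inv f) (G.comp f h) = h := by
  rw [← G.comp_assoc, G.inv_comp, G.id_comp]

theorem comp_inv_cancel_left (f : G.Hom x y) (h : G.Hom z y) :
    G.comp f (G.comp (G.inv f) h) = h := by
  rw [← G.comp_assoc, G.comp_inv, G.id_comp]

theorem eq_inv_of_comp_eq_id {f : G.Hom x y} {h : G.Hom y x} (e : G.comp f h = G.id y) :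
    h = G.inv f := by
  rw [← G.id_comp h, ← G.inv_comp f, G.comp_assoc, e, G.comp_id]

theorem inv_inv (f : G.Hom x y) : G.inv (G.inv f) = f :=
  (G.eq_inv_of_comp_eq_id (G.inv_comp f)).symm

theorem inv_comp_rev (g : G.Hom y z) (f : G.Hom x y) :
    G.inv (G.comp g f) = G.comp (G.inv f) (G.inv g) := by
  refine (G.eq_inv_of_comp_eq_id ?_).symm
  rw [G.comp_assoc, G.comp_inv_cancel_left, G.comp_inv]

end Groupoid

instance (x : G.Obj) : Mul (G.G2 x) := ⟨G.mul⟩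

instance (x : G.Obj) : One (G.G2 x) := ⟨G.one x⟩

instance (x : G.Obj) : Inv (G.G2 x) := ⟨G.inv2⟩

instance (x : G.Obj) : Group (G.G2 x) := Group.ofLeftAxioms G.mul_assoc G.one_mul G.inv2_mul

variable {x y : G.Obj}

theorem Ad_mul' (g : G.Hom x y) (a b : G.G2 x) : G.Ad g (a * b) = G.Ad g a * G.Ad g b :=
  G.Ad_mul g a b

theorem Ad_inv (g : G.Hom x y) (a : G.G2 x) : G.Ad g a⁻¹ = (G.Ad g a)⁻¹ :=
  map_inv (MonoidHom.mk' (G.Ad g) (G.Ad_mul g)) a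

theorem Ad_inv_Ad (g : G.Hom x y) (a : G.G2 x) : G.Ad (G.inv g) (G.Ad g a) = a := by
  rw [← G.Ad_comp, G.inv_comp, G.Ad_id]

theorem Ad_D (a b : G.G2 x) : G.Ad (G.D a) b = a * b * a⁻¹ := G.peiffer a b

theorem D_inv (a : G.G2 x) : G.D a⁻¹ = G.inv (G.D a) := by
  refine G.eq_inv_of_comp_eq_id ?_
  rw [← G.D_mul, ← G.D_one]
  exact congrArg G.D (mul_inv_cancel a)

theorem hcast_eq_of_heq {x x' y y' : G.Obj} (ex : x = x') (ey : y = y') {h : G.Hom x y}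
    {h' : G.Hom x' y'} (e : HEq h h') : G.hcast ex ey h = h' := by
  subst ex ey; exact eq_of_heq e

theorem hcast_comp {x x' y y' z z' : G.Obj} (ex : x = x') (ey : y = y') (ez : z = z')
    (k : G.Hom y z) (h : G.Hom x y) :
    G.hcast ex ez (G.comp k h) = G.comp (G.hcast ey ez k) (G.hcast ex ey h) := by
  subst ex ey ez; rfl

theorem hcast_inv {x x' y y' : G.Obj} (ex : x = x') (ey : y = y') (h : G.Hom x y) :
    G.hcast ey ex (G.inv h) = G.inv (G.hcast ex ey h) := by
  subst ex ey; rfl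

theorem hcast_D {x x' : G.Obj} (e : x = x') (a : G.G2 x) :
    G.hcast e e (G.D a) = G.D (G.cast2 e a) := by
  subst e; rfl

theorem cast2_inv {x x' : G.Obj} (e : x = x') (a : G.G2 x) :
    G.cast2 e a⁻¹ = (G.cast2 e a)⁻¹ := by
  subst e; rfl

theorem cast2_Ad {x x' y y' : G.Obj} (ex : x = x') (ey : y = y') (g : G.Hom x y)
    (a : G.G2 x) : G.cast2 ey (G.Ad g a) = G.Ad (G.hcast ex ey g) (G.cast2 ex a) := by
  subst ex ey; rfl

def gaugeHom {y₀ y₁ y₀' y₁' : G.Obj} (f₀ : G.Hom y₀ y₀') (f₁ : G.Hom y₁ y₁') (c : G.G2 y₀)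
    (g : G.Hom y₀ y₁) : G.Hom y₀' y₁' :=
  G.comp (G.comp (G.comp f₁ g) (G.D c)) (G.inv f₀)

/-- Definition 1.7(ii) inside the single crossed groupoid `G²`: `g`, `c₀₁`, `c₀₂`, `c₁₂` stand
for the pullbacks `g_{(0,1)}`, `c_{(0,1)}`, `c_{(0,2)}`, `c_{(1,2)}`. -/
def gaugeG2 {y₀ y₁ y₀' : G.Obj} (f₀ : G.Hom y₀ y₀') (g : G.Hom y₀ y₁) (c₀₁ c₀₂ : G.G2 y₀)
    (c₁₂ : G.G2 y₁) (a : G.G2 y₀) : G.G2 y₀' :=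
  G.Ad f₀ (c₀₂⁻¹ * a * G.Ad (G.inv g) c₁₂ * c₀₁)

theorem gaugeHom_inv {y₀ y₁ y₀' y₁' : G.Obj} (f₀ : G.Hom y₀ y₀') (f₁ : G.Hom y₁ y₁')
    (c : G.G2 y₀) (g : G.Hom y₀ y₁) :
    G.gaugeHom (G.inv f₀) (G.inv f₁) (G.Ad f₀ c⁻¹) (G.gaugeHom f₀ f₁ c g) = g := by
  simp only [gaugeHom, G.D_Ad, G.D_inv, G.inv_inv, G.comp_assoc, G.inv_comp_cancel_left,
    G.comp_inv_cancel_left, G.inv_comp, G.comp_id]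

theorem gaugeG2_inv {y₀ y₁ y₀' y₁' : G.Obj} (f₀ : G.Hom y₀ y₀') (f₁ : G.Hom y₁ y₁')
    (g : G.Hom y₀ y₁) (c₀₁ c₀₂ : G.G2 y₀) (c₁₂ : G.G2 y₁) (a : G.G2 y₀) :
    G.gaugeG2 (G.inv f₀) (G.gaugeHom f₀ f₁ c₀₁ g) (G.Ad f₀ c₀₁⁻¹) (G.Ad f₀ c₀₂⁻¹)
      (G.Ad f₁ c₁₂⁻¹) (G.gaugeG2 f₀ g c₀₁ c₀₂ c₁₂ a) = a := by
  -- Peiffer: `Ad(D(c₀₁)⁻¹)` is conjugation by `c₀₁⁻¹`, which absorbs the `D(c₀₁)` inside `g'`.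
  have h_twist : G.Ad (G.inv (G.gaugeHom f₀ f₁ c₀₁ g)) (G.Ad f₁ c₁₂⁻¹)
      = G.Ad f₀ (c₀₁⁻¹ * G.Ad (G.inv g) c₁₂⁻¹ * c₀₁) := by
    simp only [gaugeHom, G.inv_comp_rev, G.inv_inv, G.Ad_comp, G.Ad_inv_Ad, ← G.D_inv, G.Ad_D,
      _root_.inv_inv]
  rw [gaugeG2, gaugeG2, h_twist]
  simp only [G.Ad_mul', G.Ad_inv, G.Ad_inv_Ad]
  group

end CrossedGroupoid

namespace CrossedGroupoidHom

variable {G H : CrossedGroupoid} (F : CrossedGroupoidHom G H)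

theorem map1_inv {x y : G.Obj} (f : G.Hom x y) : F.map1 (G.inv f) = H.inv (F.map1 f) :=
  H.eq_inv_of_comp_eq_id (by rw [← F.map1_comp, G.comp_inv, F.map1_id])

theorem map2_inv {x : G.Obj} (a : G.G2 x) : F.map2 a⁻¹ = (F.map2 a)⁻¹ :=
  map_inv (MonoidHom.mk' (F.map2 (x := x)) F.map2_mul) a

theorem map1_heq_of_eq {F' : CrossedGroupoidHom G H} (e : F = F') {x y : G.Obj}
    (f : G.Hom x y) : HEq (F.map1 f) (F'.map1 f) := by
  subst e; rfl

end CrossedGroupoidHom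

namespace CosimplicialCrossedGroupoid

variable (G : CosimplicialCrossedGroupoid) {x x' x'' : (G.obj 0).Obj} {p q : ℕ}
  (α : Fin (p + 1) →o Fin (q + 1))

/-- The paper's `f_{(i)}`, in `Gᵖ`. -/
def vtxHom (f : (G.obj 0).Hom x x') (p : ℕ) (i : Fin (p + 1)) :
    (G.obj p).Hom (G.X x p i) (G.X x' p i) :=
  (G.map (vtxMap i)).map1 f

theorem vtxHom_inv (f : (G.obj 0).Hom x x') (p : ℕ) (i : Fin (p + 1)) :
    G.vtxHom ((G.obj 0).inv f) p i = (G.obj p).inv (G.vtxHom f p i) :=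
  (G.map (vtxMap i)).map1_inv f

/-- `push1` for 1-morphisms between vertex objects of two different base objects. -/
def pushHom {i j : Fin (p + 1)} (h : (G.obj p).Hom (G.X x p i) (G.X x' p j)) :
    (G.obj q).Hom (G.X x q (α i)) (G.X x' q (α j)) :=
  (G.obj q).hcast (G.X_push x α i) (G.X_push x' α j) ((G.map α).map1 h)

theorem push1_eq_pushHom {i j : Fin (p + 1)} (g : (G.obj p).Hom (G.X x p i) (G.X x p j)) :
    G.push1 α g = G.pushHom α g := rfl

theorem pushHom_comp {i j k : Fin (p + 1)} (g : (G.obj p).Hom (G.X x' p j) (G.X x'' p k))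
    (h : (G.obj p).Hom (G.X x p i) (G.X x' p j)) :
    G.pushHom α ((G.obj p).comp g h) = (G.obj q).comp (G.pushHom α g) (G.pushHom α h) := by
  rw [pushHom, (G.map α).map1_comp, (G.obj q).hcast_comp _ (G.X_push x' α j)]
  rfl

theorem pushHom_inv {i j : Fin (p + 1)} (h : (G.obj p).Hom (G.X x p i) (G.X x' p j)) :
    G.pushHom α ((G.obj p).inv h) = (G.obj q).inv (G.pushHom α h) := by
  rw [pushHom, (G.map α).map1_inv, (G.obj q).hcast_inv]
  rfl

theorem pushHom_D {i : Fin (p + 1)} (a : (G.obj p).G2 (G.X x p i)) :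
    G.pushHom α ((G.obj p).D a) = (G.obj q).D (G.push2 α a) := by
  rw [pushHom, (G.map α).map_D, (G.obj q).hcast_D]
  rfl

theorem pushHom_vtxHom (i : Fin (p + 1)) (f : (G.obj 0).Hom x x') :
    G.pushHom α (G.vtxHom f p i) = G.vtxHom f q (α i) :=
  (G.obj q).hcast_eq_of_heq _ _
    (CrossedGroupoidHom.map1_heq_of_eq _ (G.map_comp α (vtxMap i)).symm f)

theorem push2_inv {i : Fin (p + 1)} (a : (G.obj p).G2 (G.X x p i)) :
    G.push2 α a⁻¹ = (G.push2 α a)⁻¹ := by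
  rw [push2, (G.map α).map2_inv, (G.obj q).cast2_inv]
  rfl

theorem push2_Ad {i j : Fin (p + 1)} (h : (G.obj p).Hom (G.X x p i) (G.X x' p j))
    (a : (G.obj p).G2 (G.X x p i)) :
    G.push2 α ((G.obj p).Ad h a) = (G.obj q).Ad (G.pushHom α h) (G.push2 α a) := by
  rw [push2, (G.map α).map_Ad, (G.obj q).cast2_Ad (G.X_push x α i)]
  rfl

theorem push1_gaugeHom (ε : Fin 2 →o Fin (q + 1)) (f : (G.obj 0).Hom x x')
    (c : (G.obj 1).G2 (G.X x 1 0)) (g : (G.obj 1).Hom (G.X x 1 0) (G.X x 1 1)) :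
    G.push1 ε ((G.obj 1).gaugeHom (G.vtxHom f 1 0) (G.vtxHom f 1 1) c g)
      = (G.obj q).gaugeHom (G.vtxHom f q (ε 0)) (G.vtxHom f q (ε 1))
          (G.push2 ε c) (G.push1 ε g) := by
  simp only [CrossedGroupoid.gaugeHom, push1_eq_pushHom, pushHom_comp, pushHom_inv, pushHom_D,
    pushHom_vtxHom]

theorem isGauge_iff {g : (G.obj 1).Hom (G.X x 1 0) (G.X x 1 1)} {a : (G.obj 2).G2 (G.X x 2 0)}
    {g' : (G.obj 1).Hom (G.X x' 1 0) (G.X x' 1 1)} {a' : (G.obj 2).G2 (G.X x' 2 0)}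
    {f : (G.obj 0).Hom x x'} {c : (G.obj 1).G2 (G.X x 1 0)} :
    G.IsGauge x g a x' g' a' f c ↔
      g' = (G.obj 1).gaugeHom (G.vtxHom f 1 0) (G.vtxHom f 1 1) c g ∧
      a' = (G.obj 2).gaugeG2 (G.vtxHom f 2 0) (G.push1 (edgeMap 0 1 (by decide)) g)
        (G.push2 (edgeMap 0 1 (by decide)) c) (G.push2 (edgeMap 0 2 (by decide)) c)
        (G.push2 (edgeMap 1 2 (by decide)) c) a :=
  Iff.rfl

end CosimplicialCrossedGroupoid

/-- the inverse of a gauge transformation: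
(f⁻¹, Ad(f_(0))(c⁻¹)) is a gauge transformation (x',g',a') → (x,g,a). -/
theorem gauge_inv (G : CosimplicialCrossedGroupoid) (P P' : G.Desc)
    (f : (G.obj 0).Hom P.x P'.x) (c : (G.obj 1).G2 (G.X P.x 1 0))
    (hfc : G.IsGauge P.x P.g P.a P'.x P'.g P'.a f c) :
    G.IsGauge P'.x P'.g P'.a P.x P.g P.a ((G.obj 0).inv f)
      ((G.obj 1).Ad ((G.map (vtxMap (0 : Fin 2))).map1 f) ((G.obj 1).inv2 c)) := by
  obtain ⟨hg, ha⟩ := G.isGauge_iff.1 hfc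
  show G.IsGauge _ _ _ _ _ _ _ ((G.obj 1).Ad (G.vtxHom f 1 0) c⁻¹)
  refine G.isGauge_iff.2 ⟨?_, ?_⟩
  · rw [G.vtxHom_inv, G.vtxHom_inv, hg]
    exact ((G.obj 1).gaugeHom_inv _ _ c P.g).symm
  · rw [G.vtxHom_inv, hg, ha, G.push1_gaugeHom]
    simp only [G.push2_Ad, G.pushHom_vtxHom, G.push2_inv]
    exact ((G.obj 2).gaugeG2_inv _ _ _ _ _ _ P.a).symm
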